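/- arXiv:1301.6648 — 2 statements merged into one kernel-verified Lean document; each statement's English description precedes it below -/
import Mathlib

section
/- Let F : ℝ → ℝ be differentiable and strictly convex, and let X be a real-valued integrable random variable on a probability space with E[|F(X)|] < ∞. Then the constant c minimizing E[D_F(X, c)] over c ∈ ℝ is c = E[X], where D_F(x,y) := F(x) - F(y) - F'(y)(x-y). Moreover E[D_F(X,c)] = E[F(X)] - F(E[X]) + D_F(E[X], c) ≥ E[F(X)] - F(E[X]) with equality iff c = E[X]. -/
/-!
For fixed `c`, `D_F(x, c)` is `F x` plus an affine function of `x`, so taking expectations gives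
`E[D_F(X, c)] = E[F(X)] - F(E[X]) + D_F(E[X], c)`. Strict convexity puts `F` strictly above its
tangent line at `c` away from `c`, so the last term is positive unless `c = E[X]`.
-/

open MeasureTheory Set

noncomputable def bregmanDiv (F : ℝ → ℝ) (x y : ℝ) : ℝ :=
  F x - F y - deriv F y * (x - y)

@[simp]
theorem bregmanDiv_self (F : ℝ → ℝ) (x : ℝ) : bregmanDiv F x x = 0 := by
  simp [bregmanDiv]

namespace StrictConvexOn

variable {S : Set ℝ} {F : ℝ → ℝ} {x y : ℝ}

theorem bregmanDiv_pos (hF : StrictConvexOn ℝ S F) (hx : x ∈ S) (hy : y ∈ S)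
    (hFy : DifferentiableAt ℝ F y) (hxy : x ≠ y) : 0 < bregmanDiv F x y := by
  unfold bregmanDiv
  rcases hxy.lt_or_gt with hlt | hgt
  · have hslope := hF.slope_lt_deriv hx hy hlt hFy
    rw [slope_def_field, div_lt_iff₀ (sub_pos.2 hlt)] at hslope
    linarith
  · have hslope := hF.deriv_lt_slope hy hx hgt hFy
    rw [slope_def_field, lt_div_iff₀ (sub_pos.2 hgt)] at hslope
    linarith

theorem bregmanDiv_nonneg (hF : StrictConvexOn ℝ S F) (hx : x ∈ S) (hy : y ∈ S)
    (hFy : DifferentiableAt ℝ F y) : 0 ≤ bregmanDiv F x y := by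
  rcases eq_or_ne x y with rfl | hxy
  · simp
  · exact (hF.bregmanDiv_pos hx hy hFy hxy).le

theorem bregmanDiv_eq_zero_iff (hF : StrictConvexOn ℝ S F) (hx : x ∈ S) (hy : y ∈ S)
    (hFy : DifferentiableAt ℝ F y) : bregmanDiv F x y = 0 ↔ x = y := by
  refine ⟨fun h ↦ ?_, fun h ↦ h ▸ bregmanDiv_self F x⟩
  by_contra hxy
  exact (hF.bregmanDiv_pos hx hy hFy hxy).ne' h

end StrictConvexOn

theorem integral_bregmanDiv {Ω : Type*} [MeasurableSpace Ω] {μ : Measure Ω}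
    [IsProbabilityMeasure μ] {F : ℝ → ℝ} {X : Ω → ℝ} (hX : Integrable X μ)
    (hFX : Integrable (fun ω ↦ F (X ω)) μ) (c : ℝ) :
    ∫ ω, bregmanDiv F (X ω) c ∂μ =
      (∫ ω, F (X ω) ∂μ) - F (∫ ω, X ω ∂μ) + bregmanDiv F (∫ ω, X ω ∂μ) c := by
  have hlin : Integrable (fun ω ↦ deriv F c * (X ω - c)) μ :=
    (hX.sub (integrable_const c)).const_mul _
  have hshift : Integrable (fun ω ↦ F (X ω) - F c) μ := hFX.sub (integrable_const _)
  unfold bregmanDiv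
  rw [integral_sub hshift hlin, integral_sub hFX (integrable_const _),
    integral_const_mul, integral_sub hX (integrable_const c)]
  simp only [integral_const, probReal_univ, one_smul]
  ring

/-- The constant minimizing the expected scalar Bregman divergence is the mean:
`E[D_F(X,c)] = E[F(X)] - F(E[X]) + D_F(E[X], c) ≥ E[F(X)] - F(E[X])`,
with equality iff `c = E[X]`. -/
theorem bregman_mean_minimizer {Ω : Type*} [MeasurableSpace Ω]
    (μ : Measure Ω) [IsProbabilityMeasure μ]
    (F : ℝ → ℝ) (hFdiff : Differentiable ℝ F) (hFconv : StrictConvexOn ℝ Set.univ F)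
    (X : Ω → ℝ) (hX : Integrable X μ) (hFX : Integrable (fun ω => F (X ω)) μ)
    (c : ℝ) :
    (∫ ω, (F (X ω) - F c - deriv F c * (X ω - c)) ∂μ =
        (∫ ω, F (X ω) ∂μ) - F (∫ ω, X ω ∂μ) +
          (F (∫ ω, X ω ∂μ) - F c - deriv F c * ((∫ ω, X ω ∂μ) - c))) ∧
    ((∫ ω, F (X ω) ∂μ) - F (∫ ω, X ω ∂μ) ≤
        ∫ ω, (F (X ω) - F c - deriv F c * (X ω - c)) ∂μ) ∧
    (∫ ω, (F (X ω) - F c - deriv F c * (X ω - c)) ∂μ =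
        (∫ ω, F (X ω) ∂μ) - F (∫ ω, X ω ∂μ) ↔ c = ∫ ω, X ω ∂μ) := by
  have hdecomp := integral_bregmanDiv hX hFX c
  have hgap_nonneg := hFconv.bregmanDiv_nonneg (mem_univ (∫ ω, X ω ∂μ)) (mem_univ c) (hFdiff c)
  have hgap_zero := hFconv.bregmanDiv_eq_zero_iff (mem_univ (∫ ω, X ω ∂μ)) (mem_univ c) (hFdiff c)
  unfold bregmanDiv at hdecomp hgap_nonneg hgap_zero
  refine ⟨hdecomp, by linarith, ?_⟩
  rw [hdecomp, add_eq_left, hgap_zero, eq_comm]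
end

section
/- Let X be a random variable on a probability space (S, s, μ) taking values in a convex set Ω ⊆ ℝ^n, with E[‖X‖] < ∞, let F : Ω → ℝ be differentiable and strictly convex with E[|F(X)|] < ∞, and let s₁ ⊆ s be a sub-σ-algebra. Then among all s₁-measurable random variables Y with values in Ω, the conditional expectation Y = E[X | s₁] minimizes E[D_F(X, Y)], where D_F(x,y) = F(x) - F(y) - ⟨∇F(y), x - y⟩. -/
open MeasureTheory Metric Set

/-- A nonempty closed convex set in a separable proper real normed space is a countable
intersection of half-spaces. -/
lemma closed_convex_eq_iInter_halfspaces {E : Type*} [NormedAddCommGroup E] [NormedSpace ℝ E]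
    [TopologicalSpace.SeparableSpace E] [ProperSpace E]
    {C : Set E} (hC : Convex ℝ C) (hCc : IsClosed C) (hne : C.Nonempty) :
    ∃ (f : ℕ × ℕ → (E →L[ℝ] ℝ)) (c : ℕ × ℕ → ℝ), C = ⋂ p, {x | c p ≤ f p x} := by
  haveI : Nonempty E := ⟨hne.choose⟩
  obtain ⟨u, hu⟩ := TopologicalSpace.exists_dense_seq E
  have key : ∀ p : ℕ × ℕ, ∃ (f : E →L[ℝ] ℝ) (c : ℝ), (∀ y ∈ C, c ≤ f y) ∧
      (Disjoint (closedBall (u p.1) (1 / (p.2 + 1))) C →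
        ∀ x ∈ closedBall (u p.1) (1 / (p.2 + 1)), f x < c) := by
    intro p
    by_cases hdisj : Disjoint (closedBall (u p.1) (1 / (p.2 + 1))) C
    · obtain ⟨f, a, b, hfa, hab, hfb⟩ :=
        geometric_hahn_banach_compact_closed (convex_closedBall _ _)
          (isCompact_closedBall _ _) hC hCc hdisj
      exact ⟨f, b, fun y hy => (hfb y hy).le, fun _ x hx => (hfa x hx).trans hab⟩
    · exact ⟨0, 0, fun y _ => le_refl _, fun h => absurd h hdisj⟩
  choose f c hfc hfx using key
  refine ⟨f, c, Set.Subset.antisymm ?_ ?_⟩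
  · intro z hz
    exact Set.mem_iInter.2 fun p => hfc p z hz
  · intro z hz
    by_contra hzC
    obtain ⟨ε, hε, hball⟩ := Metric.isOpen_iff.1 hCc.isOpen_compl z hzC
    obtain ⟨k, hk⟩ := exists_nat_one_div_lt (half_pos hε)
    obtain ⟨i, hi⟩ := hu.exists_dist_lt z (by positivity : (0:ℝ) < 1 / (k + 1))
    have hsub : closedBall (u i) (1 / (k + 1)) ⊆ ball z ε := by
      intro y hy
      rw [mem_closedBall] at hy
      rw [mem_ball]
      have : dist y z ≤ dist y (u i) + dist (u i) z := dist_triangle _ _ _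
      have h2 : dist (u i) z < 1 / (k + 1) := by rwa [dist_comm] at hi
      calc dist y z ≤ dist y (u i) + dist (u i) z := dist_triangle _ _ _
        _ < 1 / (k + 1) + 1 / (k + 1) := by
            linarith [hy, h2]
        _ < ε := by
            have hk' : (1:ℝ) / (k + 1) < ε / 2 := by exact_mod_cast hk
            linarith
    have hdisj : Disjoint (closedBall (u i) (1 / ((i, k).2 + 1))) C := by
      simp only
      exact Set.disjoint_left.2 fun y hy hyC => hball (hsub hy) hyC
    have hzball : z ∈ closedBall (u i) (1 / (k + 1)) := (mem_closedBall.2 hi.le)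
    have := hfx (i, k) hdisj z hzball
    have := Set.mem_iInter.1 hz (i, k)
    simp only [Set.mem_setOf_eq] at this
    linarith [hfx (i, k) hdisj z hzball]
open MeasureTheory

lemma condexp_clm_ae {S : Type*} {m₁ m₀ : MeasurableSpace S} (hm₁ : m₁ ≤ m₀)
    {μ : Measure S} [IsFiniteMeasure μ]
    {E : Type*} [NormedAddCommGroup E] [NormedSpace ℝ E] [CompleteSpace E]
    {X : S → E} (hXint : Integrable X μ) (L : E →L[ℝ] ℝ) :
    (fun ω => L ((μ[X|m₁]) ω)) =ᵐ[μ] μ[fun ω => L (X ω)|m₁] := by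
  haveI : SigmaFinite (μ.trim hm₁) := by
    haveI : IsFiniteMeasure (μ.trim hm₁) := isFiniteMeasure_trim hm₁
    infer_instance
  refine ae_eq_condExp_of_forall_setIntegral_eq hm₁ (L.integrable_comp hXint)
    (fun s _ _ => (L.integrable_comp integrable_condExp).integrableOn)
    (fun s hs hμs => ?_) ?_
  · rw [L.integral_comp_comm (integrable_condExp.restrict),
      L.integral_comp_comm (hXint.restrict), setIntegral_condExp hm₁ hXint hs]
  · exact StronglyMeasurable.aestronglyMeasurable
      (L.continuous.comp_stronglyMeasurable stronglyMeasurable_condExp)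

lemma condexp_mem_closure {S : Type*} {m₁ m₀ : MeasurableSpace S} (hm₁ : m₁ ≤ m₀)
    {μ : Measure S} [IsProbabilityMeasure μ] {n : ℕ}
    {Ω : Set (EuclideanSpace ℝ (Fin n))} (hΩconv : Convex ℝ Ω)
    {X : S → EuclideanSpace ℝ (Fin n)} (hXΩ : ∀ ω, X ω ∈ Ω) (hXint : Integrable X μ) :
    ∀ᵐ ω ∂μ, (μ[X|m₁]) ω ∈ closure Ω := by
  haveI : Nonempty S := by
    by_contra h
    have h1 := measure_univ (μ := μ)
    rw [Set.univ_eq_empty_iff.2 (not_nonempty_iff.1 h)] at h1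
    simp at h1
  obtain ⟨f, c, hC⟩ := closed_convex_eq_iInter_halfspaces hΩconv.closure isClosed_closure
    ⟨X Classical.ofNonempty, subset_closure (hXΩ _)⟩
  have hmem : ∀ p ω, c p ≤ f p (X ω) := by
    intro p ω
    have : X ω ∈ closure Ω := subset_closure (hXΩ ω)
    rw [hC] at this
    exact Set.mem_iInter.1 this p
  have hae : ∀ p : ℕ × ℕ, ∀ᵐ ω ∂μ, c p ≤ f p ((μ[X|m₁]) ω) := by
    intro p
    have h1 : μ[fun _ => c p|m₁] ≤ᵐ[μ] μ[fun ω => f p (X ω)|m₁] :=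
      condExp_mono (integrable_const _) ((f p).integrable_comp hXint) (ae_of_all _ (hmem p))
    have h2 := condexp_clm_ae hm₁ hXint (f p)
    have h3 : μ[fun _ => c p|m₁] = fun _ => c p := condExp_const hm₁ _
    filter_upwards [h1, h2] with ω hω1 hω2
    rw [h3] at hω1
    rw [hω2]
    exact hω1
  rw [← ae_all_iff] at hae
  filter_upwards [hae] with ω hω
  rw [hC]
  exact Set.mem_iInter.2 hω
open MeasureTheory

lemma euclid_coord_le_norm {n : ℕ} (x : EuclideanSpace ℝ (Fin n)) (i : Fin n) : |x i| ≤ ‖x‖ := by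
  rw [EuclideanSpace.norm_eq]
  have h1 : ‖x i‖ ^ 2 ≤ ∑ j, ‖x j‖ ^ 2 :=
    Finset.single_le_sum (fun j _ => sq_nonneg ‖x j‖) (Finset.mem_univ i)
  calc |x i| = Real.sqrt (‖x i‖ ^ 2) := by rw [Real.sqrt_sq_eq_abs]; simp
    _ ≤ Real.sqrt (∑ j, ‖x j‖ ^ 2) := Real.sqrt_le_sqrt h1

lemma bounded_inner_integral_eq {S : Type*} {m₁ m₀ : MeasurableSpace S} (hm₁ : m₁ ≤ m₀)
    {μ : Measure S} [IsProbabilityMeasure μ] {n : ℕ}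
    {X : S → EuclideanSpace ℝ (Fin n)} (hXint : Integrable X μ)
    {G : S → EuclideanSpace ℝ (Fin n)} (hG : StronglyMeasurable[m₁] G)
    {k : ℝ} (hk : ∀ ω, ‖G ω‖ ≤ k) :
    ∫ ω, (inner ℝ (G ω) (X ω) : ℝ) ∂μ = ∫ ω, (inner ℝ (G ω) ((μ[X|m₁]) ω) : ℝ) ∂μ := by
  haveI : SigmaFinite (μ.trim hm₁) := by
    haveI : IsFiniteMeasure (μ.trim hm₁) := isFiniteMeasure_trim hm₁
    infer_instance
  set Z := μ[X|m₁] with hZ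
  have hZint : Integrable Z μ := integrable_condExp
  -- coordinates
  have hGi : ∀ i, StronglyMeasurable[m₁] (fun ω => G ω i) := fun i =>
    (EuclideanSpace.proj i).continuous.comp_stronglyMeasurable hG
  have hGibdd : ∀ i ω, ‖G ω i‖ ≤ k := fun i ω =>
    (euclid_coord_le_norm (G ω) i).trans (hk ω)
  have hmul : ∀ (W : S → EuclideanSpace ℝ (Fin n)), Integrable W μ → ∀ i,
      Integrable (fun ω => G ω i * W ω i) μ := by
    intro W hW i
    have hWi : Integrable (fun ω => W ω i) μ := by
      have := (EuclideanSpace.proj (𝕜 := ℝ) i).integrable_comp hW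
      simpa using this
    exact Integrable.bdd_mul hWi (((hGi i).mono hm₁).aestronglyMeasurable) (ae_of_all _ (hGibdd i))
  have hXi : ∀ i, Integrable (fun ω => X ω i) μ := by
    intro i
    have := (EuclideanSpace.proj (𝕜 := ℝ) i).integrable_comp hXint
    simpa using this
  have hsum : ∀ (W : S → EuclideanSpace ℝ (Fin n)), Integrable W μ →
      ∫ ω, (inner ℝ (G ω) (W ω) : ℝ) ∂μ = ∑ i, ∫ ω, G ω i * W ω i ∂μ := by
    intro W hW
    rw [← integral_finset_sum _ (fun i _ => hmul W hW i)]
    congr 1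
    funext ω
    simp [PiLp.inner_apply, mul_comm]
  rw [hsum X hXint, hsum Z hZint]
  refine Finset.sum_congr rfl fun i _ => ?_
  have hpull : μ[(fun ω => G ω i) * (fun ω => X ω i)|m₁] =ᵐ[μ]
      (fun ω => G ω i) * μ[fun ω => X ω i|m₁] :=
    condExp_mul_of_stronglyMeasurable_left (hGi i) (hmul X hXint i) (hXi i)
  have hcoord : (fun ω => Z ω i) =ᵐ[μ] μ[fun ω => X ω i|m₁] := by
    have := condexp_clm_ae hm₁ hXint (EuclideanSpace.proj i)
    simpa using this
  calc ∫ ω, G ω i * X ω i ∂μ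
      = ∫ ω, (μ[(fun ω => G ω i) * (fun ω => X ω i)|m₁]) ω ∂μ :=
        (integral_condExp hm₁).symm
    _ = ∫ ω, G ω i * (μ[fun ω => X ω i|m₁]) ω ∂μ := integral_congr_ae hpull
    _ = ∫ ω, G ω i * Z ω i ∂μ := by
        refine integral_congr_ae ?_
        filter_upwards [hcoord] with ω hω
        rw [hω]
open MeasureTheory

lemma inner_condexp_orthogonal {S : Type*} {m₁ m₀ : MeasurableSpace S} (hm₁ : m₁ ≤ m₀)
    {μ : Measure S} [IsProbabilityMeasure μ] {n : ℕ}
    {X : S → EuclideanSpace ℝ (Fin n)} (hXint : Integrable X μ)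
    {G : S → EuclideanSpace ℝ (Fin n)} (hG : StronglyMeasurable[m₁] G)
    (hint : Integrable (fun ω => (inner ℝ (G ω) (X ω - (μ[X|m₁]) ω) : ℝ)) μ) :
    ∫ ω, (inner ℝ (G ω) (X ω - (μ[X|m₁]) ω) : ℝ) ∂μ = 0 := by
  set Z := μ[X|m₁] with hZdef
  have hZint : Integrable Z μ := integrable_condExp
  set A : ℕ → Set S := fun k => {ω | ‖G ω‖ ≤ (k:ℝ)} with hAdef
  have hA : ∀ k, MeasurableSet[m₁] (A k) := fun k =>
    hG.norm.measurable measurableSet_Iic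
  set Gk : ℕ → S → EuclideanSpace ℝ (Fin n) := fun k => (A k).indicator G with hGkdef
  have hGk_sm : ∀ k, StronglyMeasurable[m₁] (Gk k) := fun k => hG.indicator (hA k)
  have hGk_bdd : ∀ k ω, ‖Gk k ω‖ ≤ (k:ℝ) := by
    intro k ω
    by_cases h : ω ∈ A k
    · rw [hGkdef]; simp only [Set.indicator_of_mem h]; exact h
    · rw [hGkdef]; simp only [Set.indicator_of_notMem h, norm_zero]; positivity
  have hinner_eq : ∀ k ω, (inner ℝ (Gk k ω) (X ω - Z ω) : ℝ) =
      (A k).indicator (fun ω => (inner ℝ (G ω) (X ω - Z ω) : ℝ)) ω := by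
    intro k ω
    by_cases h : ω ∈ A k
    · rw [hGkdef]; simp only [Set.indicator_of_mem h]
    · rw [hGkdef]; simp only [Set.indicator_of_notMem h, inner_zero_left]
  have hI : ∀ k (W : S → EuclideanSpace ℝ (Fin n)), Integrable W μ →
      Integrable (fun ω => (inner ℝ (Gk k ω) (W ω) : ℝ)) μ := by
    intro k W hW
    refine Integrable.mono' (hW.norm.const_mul (k:ℝ)) ?_ ?_
    · exact AEStronglyMeasurable.inner (((hGk_sm k).mono hm₁).aestronglyMeasurable)
        hW.aestronglyMeasurable
    · filter_upwards with ω
      calc ‖(inner ℝ (Gk k ω) (W ω) : ℝ)‖ ≤ ‖Gk k ω‖ * ‖W ω‖ := norm_inner_le_norm _ _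
        _ ≤ (k:ℝ) * ‖W ω‖ := mul_le_mul_of_nonneg_right (hGk_bdd k ω) (norm_nonneg _)
  have hzero : ∀ k, ∫ ω, (inner ℝ (Gk k ω) (X ω - Z ω) : ℝ) ∂μ = 0 := by
    intro k
    have heq : (fun ω => (inner ℝ (Gk k ω) (X ω - Z ω) : ℝ)) =
        fun ω => (inner ℝ (Gk k ω) (X ω) : ℝ) - (inner ℝ (Gk k ω) (Z ω) : ℝ) := by
      funext ω; rw [inner_sub_right]
    rw [heq, integral_sub (hI k X hXint) (hI k Z hZint),
      bounded_inner_integral_eq hm₁ hXint (hGk_sm k) (hGk_bdd k), ← hZdef, sub_self]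
  have hlim : Filter.Tendsto (fun k => ∫ ω, (inner ℝ (Gk k ω) (X ω - Z ω) : ℝ) ∂μ)
      Filter.atTop (nhds (∫ ω, (inner ℝ (G ω) (X ω - Z ω) : ℝ) ∂μ)) := by
    refine tendsto_integral_of_dominated_convergence
      (fun ω => ‖(inner ℝ (G ω) (X ω - Z ω) : ℝ)‖)
      (fun k => AEStronglyMeasurable.inner (((hGk_sm k).mono hm₁).aestronglyMeasurable)
        (hXint.sub hZint).aestronglyMeasurable) hint.norm ?_ ?_
    · intro k
      filter_upwards with ω
      rw [hinner_eq k ω]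
      by_cases h : ω ∈ A k
      · rw [Set.indicator_of_mem h]
      · rw [Set.indicator_of_notMem h, norm_zero]
        exact norm_nonneg _
    · filter_upwards with ω
      obtain ⟨N, hN⟩ := exists_nat_ge ‖G ω‖
      refine Filter.Tendsto.congr' ?_ tendsto_const_nhds
      rw [Filter.EventuallyEq, Filter.eventually_atTop]
      refine ⟨N, fun k hk => ?_⟩
      have hmem : ω ∈ A k := by
        rw [hAdef]; exact hN.trans (by exact_mod_cast hk)
      rw [hGkdef]
      simp only [Set.indicator_of_mem hmem]
  have h2 : Filter.Tendsto (fun _ : ℕ => (0:ℝ)) Filter.atTop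
      (nhds (∫ ω, (inner ℝ (G ω) (X ω - Z ω) : ℝ) ∂μ)) := by
    refine hlim.congr fun k => hzero k
  exact tendsto_nhds_unique h2 tendsto_const_nhds
open MeasureTheory

lemma tendsto_integral_indicator_seq {S : Type*} {m₀ : MeasurableSpace S} {μ : Measure S}
    {f : S → ℝ} (hf : Integrable f μ) (A : ℕ → Set S) (hA : ∀ k, MeasurableSet (A k))
    (habs : ∀ ω, ∃ N : ℕ, ∀ k, N ≤ k → ω ∈ A k) :
    Filter.Tendsto (fun k => ∫ ω, (A k).indicator f ω ∂μ) Filter.atTop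
      (nhds (∫ ω, f ω ∂μ)) := by
  refine tendsto_integral_of_dominated_convergence (fun ω => ‖f ω‖)
    (fun k => (hf.aestronglyMeasurable.indicator (hA k))) hf.norm ?_ ?_
  · intro k
    filter_upwards with ω
    by_cases h : ω ∈ A k
    · rw [Set.indicator_of_mem h]
    · rw [Set.indicator_of_notMem h, norm_zero]; exact norm_nonneg _
  · filter_upwards with ω
    obtain ⟨N, hN⟩ := habs ω
    refine Filter.Tendsto.congr' ?_ tendsto_const_nhds
    rw [Filter.EventuallyEq, Filter.eventually_atTop]
    exact ⟨N, fun k hk => (Set.indicator_of_mem (hN k hk) f).symm⟩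

lemma integral_tangent_le {S : Type*} {m₁ m₀ : MeasurableSpace S} (hm₁ : m₁ ≤ m₀)
    {μ : Measure S} [IsProbabilityMeasure μ] {n : ℕ}
    {X : S → EuclideanSpace ℝ (Fin n)} (hXint : Integrable X μ)
    {Y : S → EuclideanSpace ℝ (Fin n)} (hY : StronglyMeasurable[m₁] Y)
    {G : S → EuclideanSpace ℝ (Fin n)} (hG : StronglyMeasurable[m₁] G)
    {φ : S → ℝ} (hφint : Integrable φ μ)
    (hqint : Integrable (fun ω => φ ω + (inner ℝ (G ω) (X ω - Y ω) : ℝ)) μ)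
    {ψ : S → ℝ} (hψint : Integrable ψ μ)
    (hpt : ∀ᵐ ω ∂μ, φ ω + (inner ℝ (G ω) ((μ[X|m₁]) ω - Y ω) : ℝ) ≤ ψ ω) :
    ∫ ω, (φ ω + (inner ℝ (G ω) (X ω - Y ω) : ℝ)) ∂μ ≤ ∫ ω, ψ ω ∂μ := by
  set Z := μ[X|m₁] with hZdef
  have hZint : Integrable Z μ := integrable_condExp
  set q : S → ℝ := fun ω => φ ω + (inner ℝ (G ω) (X ω - Y ω) : ℝ) with hqdef
  set A : ℕ → Set S := fun k => {ω | ‖G ω‖ ≤ (k:ℝ)} ∩ {ω | ‖Y ω‖ ≤ (k:ℝ)} with hAdef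
  have hA : ∀ k, MeasurableSet[m₁] (A k) := fun k =>
    (hG.norm.measurable measurableSet_Iic).inter (hY.norm.measurable measurableSet_Iic)
  have hA0 : ∀ k, MeasurableSet (A k) := fun k => hm₁ _ (hA k)
  have habs : ∀ ω, ∃ N : ℕ, ∀ k, N ≤ k → ω ∈ A k := by
    intro ω
    obtain ⟨N, hN⟩ := exists_nat_ge (max ‖G ω‖ ‖Y ω‖)
    refine ⟨N, fun k hk => ?_⟩
    have hNk : (N:ℝ) ≤ (k:ℝ) := by exact_mod_cast hk
    exact ⟨(le_max_left _ _).trans (hN.trans hNk), (le_max_right _ _).trans (hN.trans hNk)⟩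
  set Gk : ℕ → S → EuclideanSpace ℝ (Fin n) := fun k => (A k).indicator G with hGkdef
  have hGk_sm : ∀ k, StronglyMeasurable[m₁] (Gk k) := fun k => hG.indicator (hA k)
  have hGk_bdd : ∀ k ω, ‖Gk k ω‖ ≤ (k:ℝ) := by
    intro k ω
    by_cases h : ω ∈ A k
    · rw [hGkdef]; simp only [Set.indicator_of_mem h]; exact h.1
    · rw [hGkdef]; simp only [Set.indicator_of_notMem h, norm_zero]; positivity
  -- integrability of the pieces
  have hIbdd : ∀ k (W : S → EuclideanSpace ℝ (Fin n)), Integrable W μ →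
      Integrable (fun ω => (inner ℝ (Gk k ω) (W ω) : ℝ)) μ := by
    intro k W hW
    refine Integrable.mono' (hW.norm.const_mul (k:ℝ)) ?_ ?_
    · exact AEStronglyMeasurable.inner (((hGk_sm k).mono hm₁).aestronglyMeasurable)
        hW.aestronglyMeasurable
    · filter_upwards with ω
      calc ‖(inner ℝ (Gk k ω) (W ω) : ℝ)‖ ≤ ‖Gk k ω‖ * ‖W ω‖ := norm_inner_le_norm _ _
        _ ≤ (k:ℝ) * ‖W ω‖ := mul_le_mul_of_nonneg_right (hGk_bdd k ω) (norm_nonneg _)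
  have hIbY : ∀ k, Integrable (fun ω => (inner ℝ (Gk k ω) (Y ω) : ℝ)) μ := by
    intro k
    refine Integrable.mono' (integrable_const ((k:ℝ) * (k:ℝ))) ?_ ?_
    · exact AEStronglyMeasurable.inner (((hGk_sm k).mono hm₁).aestronglyMeasurable)
        ((hY.mono hm₁).aestronglyMeasurable)
    · filter_upwards with ω
      by_cases h : ω ∈ A k
      · calc ‖(inner ℝ (Gk k ω) (Y ω) : ℝ)‖ ≤ ‖Gk k ω‖ * ‖Y ω‖ := norm_inner_le_norm _ _
          _ ≤ (k:ℝ) * (k:ℝ) :=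
            mul_le_mul (hGk_bdd k ω) h.2 (norm_nonneg _) (by positivity)
      · rw [hGkdef]
        simp only [Set.indicator_of_notMem h, inner_zero_left, norm_zero]
        positivity
  have hIa : ∀ k, Integrable ((A k).indicator φ) μ := fun k => hφint.indicator (hA0 k)
  have hIψ : ∀ k, Integrable ((A k).indicator ψ) μ := fun k => hψint.indicator (hA0 k)
  -- key identity for the truncated integrals
  have hkey : ∀ k, ∫ ω, (A k).indicator q ω ∂μ =
      ∫ ω, ((A k).indicator φ ω + ((inner ℝ (Gk k ω) (Z ω) : ℝ)
        - (inner ℝ (Gk k ω) (Y ω) : ℝ))) ∂μ := by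
    intro k
    have hqeq : (A k).indicator q = fun ω => (A k).indicator φ ω +
        ((inner ℝ (Gk k ω) (X ω) : ℝ) - (inner ℝ (Gk k ω) (Y ω) : ℝ)) := by
      funext ω
      by_cases h : ω ∈ A k
      · rw [Set.indicator_of_mem h, Set.indicator_of_mem h, hGkdef]
        simp only [Set.indicator_of_mem h]
        rw [hqdef]
        simp only [inner_sub_right]
      · rw [Set.indicator_of_notMem h, Set.indicator_of_notMem h, hGkdef]
        simp only [Set.indicator_of_notMem h, inner_zero_left]
        ring
    have hsubX : Integrable (fun ω => (inner ℝ (Gk k ω) (X ω) : ℝ)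
        - (inner ℝ (Gk k ω) (Y ω) : ℝ)) μ := (hIbdd k X hXint).sub (hIbY k)
    have hsubZ : Integrable (fun ω => (inner ℝ (Gk k ω) (Z ω) : ℝ)
        - (inner ℝ (Gk k ω) (Y ω) : ℝ)) μ := (hIbdd k Z hZint).sub (hIbY k)
    rw [hqeq]
    beta_reduce
    rw [integral_add (hIa k) hsubX, integral_add (hIa k) hsubZ,
      integral_sub (hIbdd k X hXint) (hIbY k), integral_sub (hIbdd k Z hZint) (hIbY k),
      bounded_inner_integral_eq hm₁ hXint (hGk_sm k) (hGk_bdd k), ← hZdef]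
  -- comparison of the truncated integrals
  have hcomp : ∀ k, ∫ ω, (A k).indicator q ω ∂μ ≤ ∫ ω, (A k).indicator ψ ω ∂μ := by
    intro k
    rw [hkey k]
    have hsubZ : Integrable (fun ω => (inner ℝ (Gk k ω) (Z ω) : ℝ)
        - (inner ℝ (Gk k ω) (Y ω) : ℝ)) μ := (hIbdd k Z hZint).sub (hIbY k)
    refine integral_mono_ae ((hIa k).add hsubZ) (hIψ k) ?_
    filter_upwards [hpt] with ω hω
    by_cases h : ω ∈ A k
    · rw [Set.indicator_of_mem h, Set.indicator_of_mem h, hGkdef]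
      simp only [Set.indicator_of_mem h]
      have : (inner ℝ (G ω) (Z ω) : ℝ) - (inner ℝ (G ω) (Y ω) : ℝ)
          = (inner ℝ (G ω) (Z ω - Y ω) : ℝ) := by rw [inner_sub_right]
      rw [this]
      exact hω
    · rw [Set.indicator_of_notMem h, Set.indicator_of_notMem h, hGkdef]
      simp only [Set.indicator_of_notMem h, inner_zero_left]
      ring_nf
      exact le_refl _
  -- pass to the limit
  have h1 := tendsto_integral_indicator_seq hqint A hA0 habs
  have h2 := tendsto_integral_indicator_seq hψint A hA0 habs
  exact le_of_tendsto_of_tendsto' h1 h2 hcomp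
open MeasureTheory

lemma tangent_le_of_convex {n : ℕ} {Ω : Set (EuclideanSpace ℝ (Fin n))} (hΩconv : Convex ℝ Ω)
    {F : EuclideanSpace ℝ (Fin n) → ℝ} (hFdiff : Differentiable ℝ F)
    (hFconv : ConvexOn ℝ Ω F) {y z : EuclideanSpace ℝ (Fin n)}
    (hy : y ∈ Ω) (hz : z ∈ closure Ω) :
    F y + (inner ℝ (gradient F y) (z - y) : ℝ) ≤ F z := by
  -- first, the statement for z ∈ Ω
  have hstep : ∀ w ∈ Ω, F y + (inner ℝ (gradient F y) (w - y) : ℝ) ≤ F w := by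
    intro w hw
    set g : ℝ → ℝ := fun t => F (AffineMap.lineMap y w t) with hgdef
    have hconv : ConvexOn ℝ (Set.Icc (0:ℝ) 1) g := by
      refine (hFconv.comp_affineMap (AffineMap.lineMap y w)).subset ?_ (convex_Icc 0 1)
      intro t ht
      have : AffineMap.lineMap y w t ∈ segment ℝ y w := by
        rw [segment_eq_image_lineMap]
        exact ⟨t, ht, rfl⟩
      exact hΩconv.segment_subset hy hw this
    have hline : HasDerivAt (fun t : ℝ => AffineMap.lineMap y w t) (w - y) 0 := by
      have heq : (fun t : ℝ => AffineMap.lineMap y w t) = fun t : ℝ => t • (w - y) + y := by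
        funext t
        rw [AffineMap.lineMap_apply_module']
      rw [heq]
      simpa using ((hasDerivAt_id (0:ℝ)).smul_const (w - y)).add_const y
    have hg : HasDerivAt g (fderiv ℝ F y (w - y)) 0 := by
      have hF : HasFDerivAt F (fderiv ℝ F y) (AffineMap.lineMap y w (0:ℝ)) := by
        rw [AffineMap.lineMap_apply_zero]
        exact (hFdiff y).hasFDerivAt
      exact hF.comp_hasDerivAt 0 hline
    have hslope := hconv.le_slope_of_hasDerivAt (Set.left_mem_Icc.2 zero_le_one)
      (Set.right_mem_Icc.2 zero_le_one) zero_lt_one hg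
    have hgrad : fderiv ℝ F y (w - y) = (inner ℝ (gradient F y) (w - y) : ℝ) := by
      rw [gradient]
      rw [InnerProductSpace.toDual_symm_apply]
    rw [hgrad] at hslope
    have h01 : g 1 = F w := by simp [hgdef]
    have h00 : g 0 = F y := by simp [hgdef]
    rw [slope_def_field] at hslope
    have hq : (g 1 - g 0) / (1 - 0) = F w - F y := by rw [h01, h00]; ring
    rw [hq] at hslope
    linarith [hslope]
  -- extend to the closure by continuity
  have hclosed : IsClosed {w : EuclideanSpace ℝ (Fin n) |
      F y + (inner ℝ (gradient F y) (w - y) : ℝ) ≤ F w} := by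
    refine isClosed_le ?_ hFdiff.continuous
    exact continuous_const.add ((continuous_const.inner (continuous_id.sub continuous_const)))
  exact closure_minimal hstep hclosed hz
open MeasureTheory

/-- The conditional expectation minimizes the expected Bregman divergence among
all estimators measurable with respect to the sub-σ-algebra. -/
theorem condexp_minimizes_bregman {n : ℕ} {S : Type*} (m₁ : MeasurableSpace S) {m₀ : MeasurableSpace S}
    (μ : Measure S) [IsProbabilityMeasure μ]
    (hm₁ : m₁ ≤ m₀)
    (Ω : Set (EuclideanSpace ℝ (Fin n))) (hΩconv : Convex ℝ Ω)
    (F : EuclideanSpace ℝ (Fin n) → ℝ)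
    (hFdiff : Differentiable ℝ F) (hFconv : StrictConvexOn ℝ Ω F)
    (X : S → EuclideanSpace ℝ (Fin n)) (hXmeas : Measurable X)
    (hXΩ : ∀ ω, X ω ∈ Ω) (hXint : Integrable X μ)
    (hFXint : Integrable (fun ω => F (X ω)) μ)
    (Y : S → EuclideanSpace ℝ (Fin n))
    (hYmeas : StronglyMeasurable[m₁] Y) (hYΩ : ∀ ω, Y ω ∈ Ω)
    (hFY : Integrable (fun ω => F (Y ω)) μ)
    (hinnerY : Integrable (fun ω => (inner ℝ (gradient F (Y ω)) (X ω - Y ω) : ℝ)) μ)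
    (hFcondexp : Integrable (fun ω => F ((μ[X|m₁]) ω)) μ)
    (hinnercond : Integrable
      (fun ω => (inner ℝ (gradient F ((μ[X|m₁]) ω)) (X ω - (μ[X|m₁]) ω) : ℝ)) μ) :
    ∫ ω, (F (X ω) - F ((μ[X|m₁]) ω) -
        (inner ℝ (gradient F ((μ[X|m₁]) ω)) (X ω - (μ[X|m₁]) ω) : ℝ)) ∂μ ≤
      ∫ ω, (F (X ω) - F (Y ω) - (inner ℝ (gradient F (Y ω)) (X ω - Y ω) : ℝ)) ∂μ := by
  have hgrad_meas : Measurable (gradient F) := by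
    have h1 : Measurable (fderiv ℝ F) := measurable_fderiv (𝕜 := ℝ) (f := F)
    exact ((InnerProductSpace.toDual ℝ
      (EuclideanSpace ℝ (Fin n))).symm.continuous.measurable).comp h1
  have hGZ : StronglyMeasurable[m₁] (fun ω => gradient F ((μ[X|m₁]) ω)) :=
    (hgrad_meas.comp (stronglyMeasurable_condExp.measurable)).stronglyMeasurable
  have hGY : StronglyMeasurable[m₁] (fun ω => gradient F (Y ω)) :=
    (hgrad_meas.comp hYmeas.measurable).stronglyMeasurable
  have horth : ∫ ω, (inner ℝ (gradient F ((μ[X|m₁]) ω)) (X ω - (μ[X|m₁]) ω) : ℝ) ∂μ = 0 :=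
    inner_condexp_orthogonal hm₁ hXint hGZ hinnercond
  have hmem := condexp_mem_closure hm₁ hΩconv hXΩ hXint
  have hpt : ∀ᵐ ω ∂μ, F (Y ω) +
      (inner ℝ (gradient F (Y ω)) ((μ[X|m₁]) ω - Y ω) : ℝ) ≤ F ((μ[X|m₁]) ω) := by
    filter_upwards [hmem] with ω hω
    exact tangent_le_of_convex hΩconv hFdiff hFconv.convexOn (hYΩ ω) hω
  have hqint : Integrable
      (fun ω => F (Y ω) + (inner ℝ (gradient F (Y ω)) (X ω - Y ω) : ℝ)) μ := hFY.add hinnerY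
  have hq : ∫ ω, (F (Y ω) + (inner ℝ (gradient F (Y ω)) (X ω - Y ω) : ℝ)) ∂μ ≤
      ∫ ω, F ((μ[X|m₁]) ω) ∂μ :=
    integral_tangent_le hm₁ hXint hYmeas hGY hFY hqint hFcondexp hpt
  have hL : ∫ ω, (F (X ω) - F ((μ[X|m₁]) ω) -
      (inner ℝ (gradient F ((μ[X|m₁]) ω)) (X ω - (μ[X|m₁]) ω) : ℝ)) ∂μ =
      ∫ ω, F (X ω) ∂μ - ∫ ω, F ((μ[X|m₁]) ω) ∂μ := by
    have hsub1 : Integrable (fun ω => F (X ω) - F ((μ[X|m₁]) ω)) μ := hFXint.sub hFcondexp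
    rw [integral_sub hsub1 hinnercond, integral_sub hFXint hFcondexp, horth, sub_zero]
  have hR : ∫ ω, (F (X ω) - F (Y ω) - (inner ℝ (gradient F (Y ω)) (X ω - Y ω) : ℝ)) ∂μ =
      ∫ ω, F (X ω) ∂μ -
        ∫ ω, (F (Y ω) + (inner ℝ (gradient F (Y ω)) (X ω - Y ω) : ℝ)) ∂μ := by
    have heq : (fun ω => F (X ω) - F (Y ω) - (inner ℝ (gradient F (Y ω)) (X ω - Y ω) : ℝ)) =
        fun ω => F (X ω) - (F (Y ω) + (inner ℝ (gradient F (Y ω)) (X ω - Y ω) : ℝ)) := by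
      funext ω; ring
    rw [heq, integral_sub hFXint hqint]
  rw [hL, hR]
  linarith [hq]
end
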